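/- arXiv:2512.15593 — 15 statements merged into one kernel-verified Lean document; each statement's English description precedes it below -/
import Mathlib

section
/- A topological space X is sequentially compact if and only if for every countable family of sequences x_k : ℕ → X (k ∈ ℕ) there exists an infinite set H ⊆ ℕ such that every sequence x_k converges along H. -/
open Filter Topology Cardinal

/-- A sequence `x` converges along an infinite set `H` if some point is a limit of `x`
restricted to `H`. -/
def ConvergesAlong {X : Type*} [TopologicalSpace X] (x : ℕ → X) (H : Set ℕ) : Prop :=
  ∃ p : X, Filter.Tendsto x (Filter.atTop ⊓ Filter.principal H) (nhds p)

/-- A splitting family. -/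
def IsSplittingFamily (𝒮 : Set (Set ℕ)) : Prop :=
  ∀ A : Set ℕ, A.Infinite → ∃ S ∈ 𝒮, (A ∩ S).Infinite ∧ (A \ S).Infinite

/-- The splitting number 𝔰. -/
noncomputable def splittingNumber : Cardinal :=
  sInf { c | ∃ 𝒮 : Set (Set ℕ), IsSplittingFamily 𝒮 ∧ #𝒮 = c }

/-- A set of infinite subsets of ℕ that is open (downwards closed) and dense. -/
def IsOpenDense (𝒟 : Set (Set ℕ)) : Prop :=
  (∀ H ∈ 𝒟, H.Infinite) ∧
  (∀ H ∈ 𝒟, ∀ H' : Set ℕ, H' ⊆ H → H'.Infinite → H' ∈ 𝒟) ∧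
  (∀ H : Set ℕ, H.Infinite → ∃ H' ∈ 𝒟, H' ⊆ H)

/-- The distributivity number 𝔥. -/
noncomputable def distributivityNumber : Cardinal :=
  sInf { c | ∃ (ι : Type) (D : ι → Set (Set ℕ)),
    (∀ i, IsOpenDense (D i)) ∧ (⋂ i, D i) = ∅ ∧ #ι = c }

/-- The set of limit points of `Y`: points that are limits of sequences with values in `Y`. -/
def seqLimitPoints {X : Type*} [TopologicalSpace X] (Y : Set X) : Set X :=
  {p | ∃ u : ℕ → X, (∀ n, u n ∈ Y) ∧ Filter.Tendsto u Filter.atTop (nhds p)}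

/-- The least sequentially closed superset of `U`. -/
def seqCl {X : Type*} [TopologicalSpace X] (U : Set X) : Set X :=
  ⋂₀ {C | U ⊆ C ∧ IsSeqClosed C}

/-- A sequentially separating limit cover for `Y`. -/
def IsSepLimitCover {X : Type*} [TopologicalSpace X] (Y : Set X) (𝒞 : Set (Set X)) : Prop :=
  (∀ U ∈ 𝒞, U ⊆ seqLimitPoints Y ∧ ∃ V : Set X, IsOpen V ∧ U = V ∩ seqLimitPoints Y) ∧
  (∀ p ∈ seqLimitPoints Y, ∀ q : X, q ≠ p → ∃ U ∈ 𝒞, p ∈ U ∧ q ∉ seqCl U)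

/-- The weight of a topological space: least cardinality of a topological basis. -/
noncomputable def TopologicalSpace.weight (X : Type*) [t : TopologicalSpace X] : Cardinal :=
  sInf { c | ∃ B : Set (Set X), TopologicalSpace.IsTopologicalBasis B ∧ #B = c }
/-- For a strictly monotone `g`, the filter `atTop ⊓ 𝓟 (range g)` is at most `map g atTop`. -/
lemma atTop_inf_principal_range_le {g : ℕ → ℕ} (hg : StrictMono g) :
    atTop ⊓ 𝓟 (Set.range g) ≤ Filter.map g atTop := by
  intro S hS
  rw [Filter.mem_map, Filter.mem_atTop_sets] at hS
  obtain ⟨N, hN⟩ := hS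
  have : Set.Ici (g N) ∩ Set.range g ⊆ S := by
    rintro m ⟨hm, j, rfl⟩
    exact hN j ((hg.le_iff_le).mp hm)
  exact Filter.mem_of_superset
    (Filter.inter_mem_inf (Filter.mem_atTop _) (Filter.mem_principal_self _)) this

theorem seqCompact_iff_countable_simultaneous (X : Type) [TopologicalSpace X] :
    SeqCompactSpace X ↔
      ∀ x : ℕ → ℕ → X, ∃ H : Set ℕ, H.Infinite ∧ ∀ k : ℕ, ConvergesAlong (x k) H := by
  constructor
  · intro hX x
    have key : ∀ u : ℕ → X, ∃ φ : ℕ → ℕ, StrictMono φ ∧ ∃ p, Tendsto (u ∘ φ) atTop (𝓝 p) := by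
      intro u
      obtain ⟨a, φ, hφ, h⟩ := SeqCompactSpace.tendsto_subseq (X := X) u
      exact ⟨φ, hφ, a, h⟩
    choose Φ hΦmono hΦconv using key
    -- iterated subsequences
    let F : ℕ → (ℕ → ℕ) := fun k => Nat.rec (Φ (x 0)) (fun k Fk => Fk ∘ Φ (x (k + 1) ∘ Fk)) k
    have hF0 : F 0 = Φ (x 0) := rfl
    have hFsucc : ∀ k, F (k + 1) = F k ∘ Φ (x (k + 1) ∘ F k) := fun k => rfl
    have hFmono : ∀ k, StrictMono (F k) := by
      intro k
      induction k with
      | zero => exact hΦmono _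
      | succ k ih => rw [hFsucc]; exact ih.comp (hΦmono _)
    have hFconv : ∀ k, ∃ p, Tendsto (x k ∘ F k) atTop (𝓝 p) := by
      intro k
      cases k with
      | zero => exact hΦconv _
      | succ k => exact hΦconv (x (k + 1) ∘ F k)
    choose p hp using hFconv
    -- diagonal
    set g : ℕ → ℕ := fun n => F n n with hg
    -- key structural lemma
    have struct : ∀ m k n, ∃ j, n ≤ j ∧ F (k + m) n = F k j := by
      intro m
      induction m with
      | zero => exact fun k n => ⟨n, le_refl n, rfl⟩
      | succ m ih =>
        intro k n
        have h1 : F (k + (m + 1)) n = F (k + m) (Φ (x (k + m + 1) ∘ F (k + m)) n) := by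
          rw [show k + (m + 1) = (k + m) + 1 from rfl, hFsucc]; rfl
        obtain ⟨j, hj1, hj2⟩ := ih k (Φ (x (k + m + 1) ∘ F (k + m)) n)
        exact ⟨j, le_trans ((hΦmono _).le_apply) hj1, by rw [h1, hj2]⟩
    have hgF : ∀ k n, k ≤ n → ∃ j, n ≤ j ∧ g n = F k j := by
      intro k n hkn
      obtain ⟨m, rfl⟩ := Nat.exists_eq_add_of_le hkn
      exact struct m k (k + m)
    have hgmono : StrictMono g := by
      have step : ∀ n, g n < g (n + 1) := by
        intro n
        obtain ⟨j, hj1, hj2⟩ := hgF n (n + 1) (Nat.le_succ n)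
        show g n < g (n + 1)
        rw [hj2]
        exact (hFmono n) (Nat.lt_of_succ_le hj1)
      exact strictMono_nat_of_lt_succ step
    refine ⟨Set.range g, Set.infinite_range_of_injective hgmono.injective, fun k => ⟨p k, ?_⟩⟩
    have hcomp : Tendsto (x k ∘ g) atTop (𝓝 (p k)) := by
      rw [Filter.tendsto_def]
      intro U hU
      have := (hp k) hU
      rw [Filter.mem_map, Filter.mem_atTop_sets] at this
      obtain ⟨N, hN⟩ := this
      rw [Filter.mem_atTop_sets]
      refine ⟨max k N, fun n hn => ?_⟩
      obtain ⟨j, hj1, hj2⟩ := hgF k n (le_trans (le_max_left _ _) hn)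
      have : x k (F k j) ∈ U := hN j (le_trans (le_trans (le_max_right _ _) hn) hj1)
      simpa [hj2] using this
    exact (Filter.tendsto_map' hcomp).mono_left (atTop_inf_principal_range_le hgmono)
  · intro h
    constructor
    intro u _
    obtain ⟨H, hHinf, hH⟩ := h (fun _ => u)
    obtain ⟨q, hq⟩ := hH 0
    classical
    haveI : Infinite H := Set.infinite_coe_iff.mpr hHinf
    let g := Nat.orderEmbeddingOfSet H
    have hrange : Set.range (g : ℕ → ℕ) = H := Nat.orderEmbeddingOfSet_range H
    have hgm : StrictMono (g : ℕ → ℕ) := g.strictMono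
    have hgt : Tendsto (g : ℕ → ℕ) atTop (atTop ⊓ 𝓟 H) := by
      refine Filter.tendsto_inf.mpr ⟨hgm.tendsto_atTop, Filter.tendsto_principal.mpr ?_⟩
      exact Filter.Eventually.of_forall fun n => hrange ▸ Set.mem_range_self n
    exact ⟨q, Set.mem_univ q, g, hgm, hq.comp hgt⟩
end

section
/- Let X be a topological space containing two points a and b such that the closure of {a} and the closure of {b} are disjoint. Then there exist an index type I with #I = 𝔰 and sequences x : I → ℕ → X such that there is no infinite set H ⊆ ℕ along which all the sequences x i converge. -/
open Filter Topology Cardinal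

open scoped Classical

lemma univ_isSplittingFamily : IsSplittingFamily (Set.univ : Set (Set ℕ)) := by
  intro A hA
  obtain f := hA.natEmbedding
  refine ⟨Set.range (fun n => (f (2*n) : ℕ)), Set.mem_univ _, ?_, ?_⟩
  · have hsub : Set.range (fun n => (f (2*n) : ℕ)) ⊆ A := by
      rintro _ ⟨n, rfl⟩; exact (f (2*n)).2
    have : A ∩ Set.range (fun n => (f (2*n) : ℕ)) = Set.range (fun n => (f (2*n) : ℕ)) := by
      rw [Set.inter_eq_right]; exact hsub
    rw [this]
    apply Set.infinite_range_of_injective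
    intro m n h
    simp only at h
    have := f.injective (Subtype.ext h)
    omega
  · have hsub : Set.range (fun n => (f (2*n+1) : ℕ)) ⊆ A \ Set.range (fun n => (f (2*n) : ℕ)) := by
      rintro _ ⟨n, rfl⟩
      refine ⟨(f (2*n+1)).2, ?_⟩
      rintro ⟨m, hm⟩
      have := f.injective (Subtype.ext hm)
      omega
    refine Set.Infinite.mono hsub ?_
    apply Set.infinite_range_of_injective
    intro m n h
    simp only at h
    have := f.injective (Subtype.ext h)
    omega

lemma atTop_inf_principal_neBot {T : Set ℕ} (hT : T.Infinite) :
    (Filter.atTop ⊓ Filter.principal T).NeBot := by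
  rw [Filter.inf_principal_neBot_iff]
  intro U hU
  obtain ⟨N, hN⟩ := Filter.mem_atTop_sets.mp hU
  obtain ⟨n, hnT, hn⟩ := hT.exists_gt N
  exact ⟨n, hN n hn.le, hnT⟩

theorem not_splittingNumber_ssc_of_nontrivial (X : Type) [TopologicalSpace X] (a b : X)
    (hab : closure {a} ∩ closure {b} = ∅) :
    ∃ (I : Type) (x : I → ℕ → X), #I = splittingNumber ∧
      ¬ ∃ H : Set ℕ, H.Infinite ∧ ∀ i : I, ConvergesAlong (x i) H := by
  have hne : { c | ∃ 𝒮 : Set (Set ℕ), IsSplittingFamily 𝒮 ∧ #𝒮 = c }.Nonempty :=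
    ⟨_, Set.univ, univ_isSplittingFamily, rfl⟩
  obtain ⟨𝒮, h𝒮, hcard⟩ := csInf_mem hne
  refine ⟨𝒮, fun S n => if n ∈ S.1 then a else b, hcard, ?_⟩
  rintro ⟨H, hH, hconv⟩
  obtain ⟨S, hS𝒮, h1, h2⟩ := h𝒮 H hH
  obtain ⟨p, hp⟩ := hconv ⟨S, hS𝒮⟩
  have key : ∀ T : Set ℕ, T ⊆ H → T.Infinite → ∀ c : X,
      (∀ n ∈ T, (if n ∈ S then a else b) = c) → p ∈ closure {c} := by
    intro T hTH hTinf c hc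
    have hNB := atTop_inf_principal_neBot hTinf
    have hle : Filter.atTop ⊓ Filter.principal T ≤ Filter.atTop ⊓ Filter.principal H :=
      inf_le_inf_left _ (Filter.principal_mono.mpr hTH)
    have htd : Filter.Tendsto (fun n => if n ∈ S then a else b)
        (Filter.atTop ⊓ Filter.principal T) (nhds p) := hp.mono_left hle
    refine mem_closure_of_tendsto htd ?_
    have : ∀ᶠ n in Filter.atTop ⊓ Filter.principal T, n ∈ T :=
      Filter.eventually_inf_principal.mpr (Filter.Eventually.of_forall fun n hn => hn)
    filter_upwards [this] with n hn
    rw [hc n hn]; exact rfl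
  have hpa : p ∈ closure {a} := by
    refine key (H ∩ S) Set.inter_subset_left h1 a ?_
    intro n hn; simp [hn.2]
  have hpb : p ∈ closure {b} := by
    refine key (H \ S) Set.diff_subset h2 b ?_
    intro n hn; simp [hn.2]
  have : p ∈ closure {a} ∩ closure {b} := ⟨hpa, hpb⟩
  rw [hab] at this
  exact this
end

section
/- Let I be a type with #I < 𝔰 and let x : I → ℕ → Bool be a family of sequences with values in the two-point discrete space Bool. Then there exists an infinite set H ⊆ ℕ such that every sequence x i converges along H. -/
open Filter Topology Cardinal

lemma tendsto_bool_of_eventually {x : ℕ → Bool} {A : Set ℕ} {b : Bool}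
    (h : ∀ᶠ n in Filter.atTop, n ∈ A → x n = b) :
    Filter.Tendsto x (Filter.atTop ⊓ Filter.principal A) (nhds b) := by
  rw [congrFun (nhds_discrete Bool) b, Filter.tendsto_pure]
  rwa [Filter.eventually_inf_principal]

theorem bool_simultaneous_of_lt_splittingNumber (I : Type) (hI : #I < splittingNumber)
    (x : I → ℕ → Bool) :
    ∃ H : Set ℕ, H.Infinite ∧ ∀ i : I, ConvergesAlong (x i) H := by
  set 𝒮 : Set (Set ℕ) := Set.range (fun i => (x i) ⁻¹' {true}) with h𝒮
  have hcard : #𝒮 ≤ #I := Cardinal.mk_range_le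
  have hnotsplit : ¬ IsSplittingFamily 𝒮 := by
    intro hs
    have : splittingNumber ≤ #𝒮 := csInf_le' ⟨𝒮, hs, rfl⟩
    exact absurd (this.trans hcard) (not_le.2 hI)
  rw [IsSplittingFamily] at hnotsplit
  push_neg at hnotsplit
  obtain ⟨A, hAinf, hA⟩ := hnotsplit
  refine ⟨A, hAinf, fun i => ?_⟩
  have := hA ((x i) ⁻¹' {true}) ⟨i, rfl⟩
  rcases Set.finite_or_infinite (A ∩ (x i) ⁻¹' {true}) with h | hinf
  · refine ⟨false, tendsto_bool_of_eventually ?_⟩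
    obtain ⟨N, hN⟩ := h.bddAbove
    filter_upwards [Filter.eventually_gt_atTop N] with n hn hnA
    by_contra hx
    have : x i n = true := by cases hxi : x i n <;> simp_all
    exact absurd (hN ⟨hnA, this⟩) (not_le.2 hn)
  · have h := this hinf
    refine ⟨true, tendsto_bool_of_eventually ?_⟩
    obtain ⟨N, hN⟩ := h.bddAbove
    filter_upwards [Filter.eventually_gt_atTop N] with n hn hnA
    by_contra hx
    exact absurd (hN ⟨hnA, by simpa using hx⟩) (not_le.2 hn)
end

section
/- Let X be a sequentially compact topological space with weight(X) < 𝔰, let I be a type with #I < 𝔰, and let x : I → ℕ → X be a family of sequences. Then there exists an infinite set H ⊆ ℕ such that every sequence x i converges along H. -/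
open Filter Topology Cardinal

lemma exists_unsplit (𝒮 : Set (Set ℕ)) (h : 𝒮.Finite) :
    ∃ H : Set ℕ, H.Infinite ∧ ∀ S ∈ 𝒮, (H ∩ S).Finite ∨ (H \ S).Finite := by
  refine Set.Finite.induction_on
    (motive := fun 𝒯 _ => ∃ H : Set ℕ, H.Infinite ∧ ∀ S ∈ 𝒯, (H ∩ S).Finite ∨ (H \ S).Finite)
    _ h ⟨Set.univ, Set.infinite_univ, by simp⟩ ?_
  intro S 𝒮' hS hfin ih
  obtain ⟨H, hHinf, hH⟩ := ih
  · 
    by_cases hc : (H ∩ S).Infinite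
    · refine ⟨H ∩ S, hc, ?_⟩
      intro T hT
      rcases hT with rfl | hT
      · right
        have : (H ∩ T) \ T = ∅ := by ext n; simp (config := {contextual := true})
        simp [this]
      · rcases hH T hT with h1 | h1
        · exact Or.inl (h1.subset (by intro n hn; exact ⟨hn.1.1, hn.2⟩))
        · exact Or.inr (h1.subset (by intro n hn; exact ⟨hn.1.1, hn.2⟩))
    · have hd : (H \ S).Infinite := by
        rw [Set.not_infinite] at hc
        have : H ⊆ (H ∩ S) ∪ (H \ S) := by
          intro n hn; by_cases h : n ∈ S
          · exact Or.inl ⟨hn, h⟩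
          · exact Or.inr ⟨hn, h⟩
        intro hfin'
        exact hHinf ((hc.union hfin').subset this)
      refine ⟨H \ S, hd, ?_⟩
      intro T hT
      rcases hT with rfl | hT
      · left
        have : (H \ T) ∩ T = ∅ := by ext n; simp (config := {contextual := true})
        simp [this]
      · rcases hH T hT with h1 | h1
        · exact Or.inl (h1.subset (by intro n hn; exact ⟨hn.1.1, hn.2⟩))
        · exact Or.inr (h1.subset (by intro n hn; exact ⟨hn.1.1, hn.2⟩))

lemma not_splitting_of_finite {𝒮 : Set (Set ℕ)} (h : 𝒮.Finite) : ¬ IsSplittingFamily 𝒮 := by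
  intro hsp
  obtain ⟨H, hHinf, hH⟩ := exists_unsplit 𝒮 h
  obtain ⟨S, hS, h1, h2⟩ := hsp H hHinf
  rcases hH S hS with h | h
  · exact h1 h
  · exact h2 h

lemma aleph0_le_splittingNumber (h0 : (0 : Cardinal) < splittingNumber) :
    ℵ₀ ≤ splittingNumber := by
  by_contra h
  push_neg at h
  rcases Set.eq_empty_or_nonempty { c | ∃ 𝒮 : Set (Set ℕ), IsSplittingFamily 𝒮 ∧ #𝒮 = c } with he | hne
  · have : splittingNumber = 0 := by
      rw [splittingNumber, he, Cardinal.sInf_empty]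
    exact absurd this h0.ne'
  · have hmem := csInf_mem hne
    obtain ⟨𝒮, hsp, hcard⟩ := hmem
    have hfin : 𝒮.Finite := by
      rw [← Cardinal.lt_aleph0_iff_set_finite]
      rw [hcard]
      exact h
    exact not_splitting_of_finite hfin hsp

lemma not_splitting_of_lt {𝒮 : Set (Set ℕ)} (h : #𝒮 < splittingNumber) :
    ¬ IsSplittingFamily 𝒮 := by
  intro hsp
  have : splittingNumber ≤ #𝒮 := csInf_le' ⟨𝒮, hsp, rfl⟩
  exact absurd this (not_le_of_gt h)


theorem simultaneous_of_seqCompact_weight_lt_splittingNumber (X : Type) [TopologicalSpace X]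
    [SeqCompactSpace X] (hw : TopologicalSpace.weight X < splittingNumber)
    (I : Type) (hI : #I < splittingNumber) (x : I → ℕ → X) :
    ∃ H : Set ℕ, H.Infinite ∧ ∀ i : I, ConvergesAlong (x i) H := by
  classical
  -- obtain a basis of minimal cardinality
  have hwne : { c | ∃ B : Set (Set X), TopologicalSpace.IsTopologicalBasis B ∧ #B = c }.Nonempty :=
    ⟨_, ⟨_, TopologicalSpace.isTopologicalBasis_opens, rfl⟩⟩
  obtain ⟨B, hB, hBcard⟩ := csInf_mem hwne
  have hBlt : #B < splittingNumber := by rw [hBcard]; exact hw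
  have h0 : (0 : Cardinal) < splittingNumber := lt_of_le_of_lt zero_le hw
  have hal : ℵ₀ ≤ splittingNumber := aleph0_le_splittingNumber h0
  set f : I × B → Set ℕ := fun p => {n | x p.1 n ∈ (p.2 : Set X)} with hf
  set 𝒮 : Set (Set ℕ) := Set.range f with h𝒮
  have hcard : #𝒮 < splittingNumber := by
    refine lt_of_le_of_lt Cardinal.mk_range_le ?_
    rw [Cardinal.mk_prod, Cardinal.lift_id, Cardinal.lift_id]
    exact Cardinal.mul_lt_of_lt hal hI hBlt
  obtain ⟨H, hHinf, hH⟩ : ∃ H : Set ℕ, H.Infinite ∧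
      ∀ S ∈ 𝒮, ¬ ((H ∩ S).Infinite ∧ (H \ S).Infinite) := by
    have := not_splitting_of_lt hcard
    rw [IsSplittingFamily] at this
    push_neg at this
    obtain ⟨H, hHinf, hH⟩ := this
    exact ⟨H, hHinf, fun S hS hc => hc.2 (hH S hS hc.1)⟩
  refine ⟨H, hHinf, fun i => ?_⟩
  -- enumerate H
  haveI : Infinite H := hHinf.to_subtype
  set e : ℕ ↪o ℕ := Nat.orderEmbeddingOfSet H
  have herange : Set.range e = H := Nat.orderEmbeddingOfSet_range H
  obtain ⟨p, φ, hφ, hconv⟩ := SeqCompactSpace.tendsto_subseq (fun n => x i (e n))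
  set ψ : ℕ → ℕ := fun m => e (φ m) with hψ
  have hψmono : StrictMono ψ := e.strictMono.comp hφ
  refine ⟨p, ?_⟩
  rw [hB.nhds_hasBasis.tendsto_right_iff]
  rintro U ⟨hU, hpU⟩
  set A : Set ℕ := {n | x i n ∈ U} with hA
  have hAmem : A ∈ 𝒮 := ⟨(i, ⟨U, hU⟩), rfl⟩
  -- H ∩ A is infinite
  have hev : ∀ᶠ m in atTop, x i (ψ m) ∈ U := hconv (hB.isOpen hU |>.mem_nhds hpU)
  have hHA : (H ∩ A).Infinite := by
    intro hfin
    obtain ⟨N, hN⟩ := hfin.bddAbove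
    obtain ⟨m, hm1, hm2⟩ := (hev.and (eventually_ge_atTop (N + 1))).exists
    have hmH : ψ m ∈ H := herange ▸ ⟨φ m, rfl⟩
    have : ψ m ≤ N := hN ⟨hmH, hm1⟩
    have : N + 1 ≤ ψ m := le_trans hm2 (hψmono.le_apply)
    omega
  have hHAc : (H \ A).Finite :=
    Set.not_infinite.mp (fun hc => hH A hAmem ⟨hHA, hc⟩)
  obtain ⟨M, hM⟩ := hHAc.bddAbove
  rw [eventually_inf_principal]
  filter_upwards [eventually_ge_atTop (M + 1)] with n hn hnH
  by_contra hnA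
  have : n ≤ M := hM ⟨hnH, hnA⟩
  omega
end

section
/- Every compact topological space X with weight(X) < 𝔰 is sequentially compact. -/
open Filter Topology Cardinal

theorem seqCompact_of_compact_weight_lt_splittingNumber (X : Type) [TopologicalSpace X]
    [CompactSpace X] (hw : TopologicalSpace.weight X < splittingNumber) :
    SeqCompactSpace X := by
  obtain ⟨B, hB, hBcard⟩ : ∃ B : Set (Set X),
      TopologicalSpace.IsTopologicalBasis B ∧ #B = TopologicalSpace.weight X :=
    csInf_mem (s := { c | ∃ B : Set (Set X), TopologicalSpace.IsTopologicalBasis B ∧ #B = c })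
      ⟨_, _, TopologicalSpace.isTopologicalBasis_opens, rfl⟩
  refine ⟨fun x _ => ?_⟩
  set 𝒮 : Set (Set ℕ) := (fun U => {n | x n ∈ U}) '' B with h𝒮
  have hnotsplit : ¬ IsSplittingFamily 𝒮 := by
    intro hs
    have h1 : splittingNumber ≤ #𝒮 := csInf_le' ⟨𝒮, hs, rfl⟩
    have h2 : #𝒮 ≤ #B := Cardinal.mk_image_le
    exact absurd ((h1.trans h2).trans_eq hBcard) hw.not_ge
  rw [IsSplittingFamily] at hnotsplit
  push_neg at hnotsplit
  obtain ⟨A, hAinf, hA⟩ := hnotsplit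
  have hF : (atTop ⊓ 𝓟 A).NeBot := by
    rw [← Nat.cofinite_eq_atTop]
    exact hAinf.cofinite_inf_principal_neBot
  obtain ⟨p, hp⟩ := exists_clusterPt_of_compactSpace (Filter.map x (atTop ⊓ 𝓟 A))
  have htend : Tendsto x (atTop ⊓ 𝓟 A) (𝓝 p) := by
    rw [(hB.nhds_hasBasis (a := p)).tendsto_right_iff]
    rintro U ⟨hUB, hpU⟩
    have hSU : {n | x n ∈ U} ∈ 𝒮 := ⟨U, hUB, rfl⟩
    have hfreq : (A ∩ {n | x n ∈ U}).Infinite := by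
      have h3 : ∃ᶠ n in atTop ⊓ 𝓟 A, x n ∈ U :=
        mapClusterPt_iff_frequently.1 hp U (hB.mem_nhds hUB hpU)
      rw [frequently_inf_principal] at h3
      have : {n | n ∈ A ∧ x n ∈ U}.Infinite := Nat.frequently_atTop_iff_infinite.1 h3
      exact this
    have hfin : (A \ {n | x n ∈ U}).Finite := by
      by_contra hcon
      exact hcon (hA _ hSU hfreq)
    rw [eventually_inf_principal]
    have := Set.Finite.eventually_cofinite_notMem hfin
    rw [Nat.cofinite_eq_atTop] at this
    filter_upwards [this] with n hn hnA
    by_contra hx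
    exact hn ⟨hnA, hx⟩
  have hfreqA : ∃ᶠ n in atTop, n ∈ A := Nat.frequently_atTop_iff_infinite.2 hAinf
  obtain ⟨φ, hφmono, hφA⟩ := extraction_of_frequently_atTop hfreqA
  refine ⟨p, Set.mem_univ p, φ, hφmono, ?_⟩
  exact htend.comp (tendsto_inf.2 ⟨hφmono.tendsto_atTop,
    tendsto_principal.2 (Eventually.of_forall hφA)⟩)
end

section
/- Let E be a separable normed real vector space, let I be a type with #I < 𝔰, and for each i ∈ I let f i : ℕ → WeakDual ℝ E be a sequence of continuous linear functionals whose operator norms satisfy ‖f i n‖ ≤ 1 for all n. Then there exists an infinite set H ⊆ ℕ such that for every i ∈ I the sequence f i converges along H in the weak-* topology. -/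
open Filter Topology Cardinal

section Aux


lemma exists_unsplit_seq (S : ℕ → Set ℕ) :
    ∃ A : Set ℕ, A.Infinite ∧ ∀ k, (A ∩ S k).Finite ∨ (A \ S k).Finite := by
  classical
  -- decreasing sequence of infinite sets
  let H : ℕ → Set ℕ := fun k => Nat.rec Set.univ
    (fun k Hk => if (Hk ∩ S k).Infinite then Hk ∩ S k else Hk \ S k) k
  have hstep : ∀ k, H (k+1) =
      if (H k ∩ S k).Infinite then H k ∩ S k else H k \ S k := fun k => rfl
  have hinf : ∀ k, (H k).Infinite := by
    intro k
    induction k with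
    | zero => exact Set.infinite_univ
    | succ k ih =>
      rw [hstep]
      by_cases h : (H k ∩ S k).Infinite
      · rwa [if_pos h]
      · rw [if_neg h]
        have hfin : (H k ∩ S k).Finite := Set.not_infinite.mp h
        have : (H k \ (H k ∩ S k)).Infinite := ih.diff hfin
        have heq : H k \ (H k ∩ S k) = H k \ S k := by
          ext n; simp only [Set.mem_diff, Set.mem_inter_iff]; tauto
        rwa [heq] at this
  have hanti : Antitone H := antitone_nat_of_succ_le (by
    intro k
    rw [hstep]
    by_cases h : (H k ∩ S k).Infinite
    · rw [if_pos h]; exact Set.inter_subset_left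
    · rw [if_neg h]; exact Set.diff_subset)
  have hsel : ∀ k, H (k+1) ⊆ S k ∨ H (k+1) ∩ S k = ∅ := by
    intro k
    rw [hstep]
    by_cases h : (H k ∩ S k).Infinite
    · rw [if_pos h]; exact Or.inl Set.inter_subset_right
    · rw [if_neg h]; right
      ext n; simp only [Set.mem_inter_iff, Set.mem_diff, Set.mem_empty_iff_false]; tauto
  -- diagonal sequence
  let a : ℕ → ℕ := fun k => Nat.rec ((hinf 1).nonempty.choose)
    (fun k ak => ((hinf (k+2)).exists_gt ak).choose) k
  have ha_mem : ∀ k, a k ∈ H (k+1) := by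
    intro k
    cases k with
    | zero => exact (hinf 1).nonempty.choose_spec
    | succ k => exact ((hinf (k+2)).exists_gt (a k)).choose_spec.1
  have ha_lt : ∀ k, a k < a (k+1) := fun k =>
    ((hinf (k+2)).exists_gt (a k)).choose_spec.2
  have ha_mono : StrictMono a := strictMono_nat_of_lt_succ ha_lt
  refine ⟨Set.range a, Set.infinite_range_of_injective ha_mono.injective, ?_⟩
  intro k
  have hsub : Set.range a \ H (k+1) ⊆ a '' Set.Iio k := by
    rintro n ⟨⟨j, rfl⟩, hn⟩
    refine ⟨j, ?_, rfl⟩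
    by_contra hj
    simp only [Set.mem_Iio, not_lt] at hj
    exact hn (hanti (Nat.succ_le_succ hj) (ha_mem j))
  have hfin : (Set.range a \ H (k+1)).Finite :=
    (Set.finite_Iio k).image a |>.subset hsub
  rcases hsel k with h | h
  · right
    exact hfin.subset fun n ⟨hn1, hn2⟩ => ⟨hn1, fun hH => hn2 (h hH)⟩
  · left
    refine hfin.subset fun n ⟨hn1, hn2⟩ => ⟨hn1, fun hH => ?_⟩
    exact absurd (Set.mem_inter hH hn2) (by rw [h]; exact id)


lemma tendsto_of_rat_cuts {F : Filter ℕ} [F.NeBot] (g : ℕ → ℝ) (c : ℝ)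
    (hb : ∀ n, |g n| ≤ c)
    (h : ∀ q : ℚ, (∀ᶠ n in F, g n < q) ∨ (∀ᶠ n in F, (q:ℝ) ≤ g n)) :
    ∃ r, Tendsto g F (𝓝 r) := by
  have hbdd : F.IsBoundedUnder (· ≤ ·) g :=
    isBoundedUnder_of ⟨c, fun n => (abs_le.mp (hb n)).2⟩
  have hbdd' : F.IsBoundedUnder (· ≥ ·) g :=
    isBoundedUnder_of ⟨-c, fun n => (abs_le.mp (hb n)).1⟩
  refine ⟨limsup g F, tendsto_of_liminf_eq_limsup ?_ rfl hbdd hbdd'⟩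
  have hle : liminf g F ≤ limsup g F := liminf_le_limsup hbdd hbdd'
  by_contra hne
  obtain ⟨q, hq1, hq2⟩ := exists_rat_btwn (lt_of_le_of_ne hle hne)
  rcases h q with h' | h'
  · exact absurd (limsup_le_of_le hbdd'.isCoboundedUnder_le (h'.mono fun n hn => hn.le))
      (not_le.mpr hq2)
  · exact absurd (le_liminf_of_le hbdd.isCoboundedUnder_ge h') (not_le.mpr hq1)

end Aux


lemma exists_unsplit_s6 {T : Type} (S : T → Set ℕ)
    (h : #(Set.range S) < splittingNumber ∨ Countable T) :
    ∃ A : Set ℕ, A.Infinite ∧ ∀ t, (A ∩ S t).Finite ∨ (A \ S t).Finite := by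
  by_contra hc
  push_neg at hc
  have hsplit : IsSplittingFamily (Set.range S) := by
    intro A hA
    obtain ⟨t, ht⟩ := hc A hA
    exact ⟨S t, Set.mem_range_self t, ht⟩
  rcases h with h | h
  · have hmem : #(Set.range S) ∈ { c | ∃ 𝒮 : Set (Set ℕ), IsSplittingFamily 𝒮 ∧ #𝒮 = c } :=
      ⟨Set.range S, hsplit, rfl⟩
    exact absurd (csInf_le' hmem) (not_le.mpr h)
  · -- countable case: contradict exists_unsplit_seq
    rcases isEmpty_or_nonempty T with hT | hT
    · obtain ⟨A, hA, _⟩ := exists_unsplit_seq (fun _ => ∅)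
      obtain ⟨t, _⟩ := hc A hA
      exact hT.elim t
    · obtain ⟨σ, hσ⟩ := exists_surjective_nat T
      obtain ⟨A, hA, hun⟩ := exists_unsplit_seq (S ∘ σ)
      obtain ⟨t, ht1, ht2⟩ := hc A hA
      obtain ⟨k, rfl⟩ := hσ t
      rcases hun k with h' | h'
      · exact ht1 h'
      · exact ht2 h'


theorem weakDual_unitBall_simultaneous (E : Type) [NormedAddCommGroup E] [NormedSpace ℝ E]
    [TopologicalSpace.SeparableSpace E]
    (I : Type) (hI : #I < splittingNumber)
    (f : I → ℕ → WeakDual ℝ E)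
    (hf : ∀ (i : I) (n : ℕ), ‖WeakDual.toStrongDual (f i n)‖ ≤ 1) :
    ∃ H : Set ℕ, H.Infinite ∧ ∀ i : I, ConvergesAlong (f i) H := by
  classical
  haveI : Nonempty E := ⟨0⟩
  obtain ⟨e, he⟩ := TopologicalSpace.exists_dense_seq E
  set S : I × ℕ × ℚ → Set ℕ := fun t => {n | (f t.1 n) (e t.2.1) < (t.2.2 : ℝ)} with hS
  have hcard : #(Set.range S) < splittingNumber ∨ Countable (I × ℕ × ℚ) := by
    by_cases hcI : Countable I
    · right; infer_instance
    · left
      have h1 : ℵ₀ ≤ #I := by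
        by_contra h
        exact hcI (Cardinal.mk_le_aleph0_iff.mp (le_of_not_ge h))
      calc #(Set.range S) ≤ #(I × ℕ × ℚ) := Cardinal.mk_range_le
        _ = #I := by
            simp only [Cardinal.mk_prod, Cardinal.lift_id, Cardinal.mk_nat,
              Cardinal.mk_denumerable, Cardinal.aleph0_mul_aleph0]
            exact Cardinal.mul_eq_left h1 h1 Cardinal.aleph0_ne_zero
        _ < splittingNumber := hI
  obtain ⟨A, hA, hun⟩ := exists_unsplit_s6 S hcard
  refine ⟨A, hA, fun i => ?_⟩

  haveI hFne : (Filter.atTop ⊓ Filter.principal A : Filter ℕ).NeBot := by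
    rw [← Nat.cofinite_eq_atTop]
    exact hA.cofinite_inf_principal_neBot
  set F : Filter ℕ := Filter.atTop ⊓ Filter.principal A with hFdef
  have hnorm : ∀ (i : I) (n : ℕ) (x : E), ‖(f i n) x‖ ≤ ‖x‖ := by
    intro i n x
    calc ‖(f i n) x‖ = ‖(WeakDual.toStrongDual (f i n)) x‖ := rfl
      _ ≤ ‖WeakDual.toStrongDual (f i n)‖ * ‖x‖ :=
          (WeakDual.toStrongDual (f i n)).le_opNorm x
      _ ≤ 1 * ‖x‖ := mul_le_mul_of_nonneg_right (hf i n) (norm_nonneg x)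
      _ = ‖x‖ := one_mul _
  have hev : ∀ (i : I) (m : ℕ) (q : ℚ),
      (∀ᶠ n in F, (f i n) (e m) < (q:ℝ)) ∨ (∀ᶠ n in F, (q:ℝ) ≤ (f i n) (e m)) := by
    intro i m q
    rcases hun (i, m, q) with hfin | hfin
    · right
      rw [hFdef, eventually_inf_principal, ← Nat.cofinite_eq_atTop, eventually_cofinite]
      refine hfin.subset fun n hn => ?_
      simp only [Set.mem_setOf_eq, not_forall, not_le] at hn
      exact ⟨hn.1, hn.2⟩
    · left
      rw [hFdef, eventually_inf_principal, ← Nat.cofinite_eq_atTop, eventually_cofinite]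
      refine hfin.subset fun n hn => ?_
      simp only [Set.mem_setOf_eq, not_forall, not_lt] at hn
      exact ⟨hn.1, fun hS => absurd hS (not_lt.mpr hn.2)⟩
  have hEm : ∀ (i : I) (m : ℕ), ∃ r : ℝ, Tendsto (fun n => (f i n) (e m)) F (𝓝 r) := by
    intro i m
    exact tendsto_of_rat_cuts (fun n => (f i n) (e m)) ‖e m‖
      (fun n => by rw [← Real.norm_eq_abs]; exact hnorm i n (e m)) (hev i m)
  have hLim : ∀ (i : I) (x : E), ∃ r : ℝ, Tendsto (fun n => (f i n) x) F (𝓝 r) := by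
    intro i x
    have hC : Cauchy (Filter.map (fun n => (f i n) x) F) := by
      rw [Metric.cauchy_iff]
      refine ⟨Filter.map_neBot, fun ε hε => ?_⟩
      obtain ⟨m, hm⟩ := he.exists_dist_lt x (by positivity : (0:ℝ) < ε/4)
      obtain ⟨r, hr⟩ := hEm i m
      have hs : {n | dist ((f i n) (e m)) r < ε/8} ∈ F :=
        hr (Metric.ball_mem_nhds r (by positivity))
      refine ⟨(fun n => (f i n) x) '' {n | dist ((f i n) (e m)) r < ε/8},
        Filter.image_mem_map hs, ?_⟩
      rintro _ ⟨n, hn, rfl⟩ _ ⟨n', hn', rfl⟩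
      have hb : ∀ k : ℕ, dist ((f i k) x) ((f i k) (e m)) < ε/4 := by
        intro k
        have : ‖(f i k) x - (f i k) (e m)‖ ≤ ‖x - e m‖ := by
          rw [← map_sub]; exact hnorm i k (x - e m)
        rw [Real.dist_eq]
        calc |(f i k) x - (f i k) (e m)| ≤ ‖x - e m‖ := this
          _ = dist x (e m) := (dist_eq_norm x (e m)).symm
          _ < ε/4 := hm
      have h1 := hb n
      have h4 : dist ((f i n') (e m)) ((f i n') x) < ε/4 := by
        rw [dist_comm]; exact hb n'
      have hmid : dist ((f i n) (e m)) ((f i n') (e m)) < ε/4 := by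
        have h2 : dist ((f i n) (e m)) r < ε/8 := hn
        have h3 : dist r ((f i n') (e m)) < ε/8 := by rw [dist_comm]; exact hn'
        calc dist ((f i n) (e m)) ((f i n') (e m))
            ≤ dist ((f i n) (e m)) r + dist r ((f i n') (e m)) := dist_triangle _ _ _
          _ < ε/4 := by linarith
      calc dist ((f i n) x) ((f i n') x)
          ≤ dist ((f i n) x) ((f i n) (e m)) + dist ((f i n) (e m)) ((f i n') (e m))
            + dist ((f i n') (e m)) ((f i n') x) := dist_triangle4 _ _ _ _
        _ < ε := by linarith
    obtain ⟨r, hr⟩ := CompleteSpace.complete hC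
    exact ⟨r, hr⟩
  choose L hL using hLim i
  have hadd : ∀ x y : E, L (x + y) = L x + L y := by
    intro x y
    refine tendsto_nhds_unique (hL (x + y)) ?_
    have : (fun n => (f i n) (x + y)) = fun n => (f i n) x + (f i n) y := by
      funext n; exact map_add _ x y
    rw [this]
    exact (hL x).add (hL y)
  have hsmul : ∀ (c : ℝ) (x : E), L (c • x) = c * L x := by
    intro c x
    refine tendsto_nhds_unique (hL (c • x)) ?_
    have : (fun n => (f i n) (c • x)) = fun n => c * (f i n) x := by
      funext n; rw [map_smul]; rfl
    rw [this]
    exact (hL x).const_mul c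
  have hLb : ∀ x : E, ‖L x‖ ≤ 1 * ‖x‖ := by
    intro x
    rw [one_mul]
    exact le_of_tendsto' (hL x).norm fun n => hnorm i n x
  let φ₀ : E →ₗ[ℝ] ℝ :=
    { toFun := L, map_add' := hadd, map_smul' := fun c x => by simp [hsmul c x] }
  let φ : E →L[ℝ] ℝ := LinearMap.mkContinuous φ₀ 1 hLb
  refine ⟨(StrongDual.toWeakDual φ), ?_⟩
  rw [tendsto_iff_forall_eval_tendsto_topDualPairing]
  intro y
  have : ∀ n, topDualPairing ℝ E (f i n) y = (f i n) y := fun n => rfl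
  simp only [this]
  have hφ : topDualPairing ℝ E (StrongDual.toWeakDual φ) y = L y := rfl
  rw [hφ]
  exact hL y
end

section
/- Let X be a Hausdorff topological space and let Y ⊆ X be a countable subset. Then there exists a sequentially separating limit cover 𝒞 for Y with #𝒞 ≤ max(ℵ₀, weight(X)). -/
open Filter Topology Cardinal

theorem exists_sepLimitCover_le_weight (X : Type) [TopologicalSpace X] [T2Space X]
    (Y : Set X) (hY : Y.Countable) :
    ∃ 𝒞 : Set (Set X), IsSepLimitCover Y 𝒞 ∧ #𝒞 ≤ max ℵ₀ (TopologicalSpace.weight X) := by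
  have hmem : TopologicalSpace.weight X ∈
      { c | ∃ B : Set (Set X), TopologicalSpace.IsTopologicalBasis B ∧ #B = c } := by
    apply csInf_mem
    exact ⟨#{U : Set X | IsOpen U}, {U : Set X | IsOpen U},
      TopologicalSpace.isTopologicalBasis_opens, rfl⟩
  obtain ⟨B, hB, hcard⟩ := hmem
  refine ⟨(fun V => V ∩ seqLimitPoints Y) '' B, ⟨?_, ?_⟩, ?_⟩
  · rintro U ⟨V, hV, rfl⟩
    exact ⟨Set.inter_subset_right, V, hB.isOpen hV, rfl⟩
  · intro p hp q hq
    obtain ⟨Wq, Wp, hWq, hWp, hqW, hpW, hd⟩ := t2_separation hq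
    obtain ⟨V, hVB, hpV, hVW⟩ := hB.exists_subset_of_mem_open hpW hWp
    refine ⟨V ∩ seqLimitPoints Y, ⟨V, hVB, rfl⟩, ⟨hpV, hp⟩, ?_⟩
    intro hqc
    have : q ∈ Wqᶜ := hqc _ ⟨fun x hx => fun hxW => Set.disjoint_left.mp hd hxW (hVW hx.1),
      (isClosed_compl_iff.mpr hWq).isSeqClosed⟩
    exact this hqW
  · calc #((fun V => V ∩ seqLimitPoints Y) '' B) ≤ #B := Cardinal.mk_image_le
      _ = TopologicalSpace.weight X := hcard
      _ ≤ max ℵ₀ (TopologicalSpace.weight X) := le_max_right _ _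
end

section
/- Let X be a Hausdorff topological space and let Y ⊆ X be a countable subset. Then there exists a sequentially separating limit cover 𝒞 for Y with #𝒞 ≤ max(ℵ₀, #X). -/
open Filter Topology Cardinal

theorem exists_sepLimitCover_le_card (X : Type) [TopologicalSpace X] [T2Space X]
    (Y : Set X) (hY : Y.Countable) :
    ∃ 𝒞 : Set (Set X), IsSepLimitCover Y 𝒞 ∧ #𝒞 ≤ max ℵ₀ #X := by
  classical
  set L := seqLimitPoints Y with hL
  have hsep : ∀ p q : X, q ≠ p → ∃ V : Set X, IsOpen V ∧ p ∈ V ∧ q ∉ closure V := by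
    intro p q hq
    obtain ⟨W, V, hW, hV, hqW, hpV, hdisj⟩ := t2_separation hq
    refine ⟨V, hV, hpV, fun h => ?_⟩
    have hsub : closure V ⊆ Wᶜ :=
      closure_minimal (Set.disjoint_right.mp hdisj) hW.isClosed_compl
    exact hsub h hqW
  choose! V hVopen hVmem hVcl using hsep
  refine ⟨(fun pq : X × X => V pq.1 pq.2 ∩ L) '' {pq | pq.2 ≠ pq.1}, ⟨?_, ?_⟩, ?_⟩
  · rintro U ⟨⟨p, q⟩, hpq, rfl⟩
    exact ⟨Set.inter_subset_right, V p q, hVopen p q hpq, rfl⟩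
  · intro p hp q hq
    refine ⟨V p q ∩ L, ⟨(p, q), hq, rfl⟩, ⟨hVmem p q hq, hp⟩, fun hmem => ?_⟩
    have : q ∈ closure (V p q) :=
      hmem (closure (V p q))
        ⟨Set.inter_subset_left.trans subset_closure, isClosed_closure.isSeqClosed⟩
    exact hVcl p q hq this
  · calc #((fun pq : X × X => V pq.1 pq.2 ∩ L) '' {pq | pq.2 ≠ pq.1})
        ≤ #{pq : X × X | pq.2 ≠ pq.1} := Cardinal.mk_image_le
      _ ≤ #(X × X) := Cardinal.mk_set_le _
      _ = #X * #X := by rw [Cardinal.mk_prod]; simp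
      _ ≤ max (max #X #X) ℵ₀ := Cardinal.mul_le_max _ _
      _ ≤ max ℵ₀ #X := by simp [max_comm]
end

section
/- Let X be a sequentially compact Hausdorff topological space and suppose there exists a cardinal κ < 𝔰 such that every countable subset Y ⊆ X admits a sequentially separating limit cover of cardinality at most κ. Let I be a type with #I < 𝔰 and let x : I → ℕ → X be a family of sequences. Then there exists an infinite set H ⊆ ℕ such that every sequence x i converges along H. -/
open Filter Topology Cardinal

-- auxiliary lemmas

lemma exists_enum {H : Set ℕ} (hH : H.Infinite) :
    ∃ e : ℕ → ℕ, StrictMono e ∧ Set.range e = H := by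
  classical
  haveI := hH.to_subtype
  exact ⟨Nat.orderEmbeddingOfSet H, (Nat.orderEmbeddingOfSet H).strictMono,
    Nat.orderEmbeddingOfSet_range H⟩

lemma tendsto_along_range {X : Type*} [TopologicalSpace X] (x : ℕ → X) {e : ℕ → ℕ}
    (he : StrictMono e) {p : X} (h : Tendsto (x ∘ e) atTop (nhds p)) :
    Tendsto x (atTop ⊓ 𝓟 (Set.range e)) (nhds p) := by
  have hle : atTop ⊓ 𝓟 (Set.range e) ≤ Filter.map e atTop := by
    intro s hs
    rw [Filter.mem_map, mem_atTop_sets] at hs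
    obtain ⟨K, hK⟩ := hs
    rw [Filter.mem_inf_principal]
    filter_upwards [eventually_ge_atTop (e K)] with n hn hmem
    obtain ⟨k, rfl⟩ := hmem
    exact hK k (he.le_iff_le.mp hn)
  exact (tendsto_map'_iff.mpr h).mono_left hle

lemma tendsto_mono_subset {X : Type*} [TopologicalSpace X] {x : ℕ → X} {H H' : Set ℕ}
    (hsub : H' ⊆ H) {p : X} (h : Tendsto x (atTop ⊓ 𝓟 H) (nhds p)) :
    Tendsto x (atTop ⊓ 𝓟 H') (nhds p) :=
  h.mono_left (inf_le_inf_left _ (principal_mono.mpr hsub))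

lemma exists_subconverge {X : Type*} [TopologicalSpace X] [SeqCompactSpace X] (x : ℕ → X)
    {H : Set ℕ} (hH : H.Infinite) :
    ∃ H' : Set ℕ, H' ⊆ H ∧ H'.Infinite ∧ ∃ p : X, Tendsto x (atTop ⊓ 𝓟 H') (nhds p) := by
  obtain ⟨e, he, hrange⟩ := exists_enum hH
  obtain ⟨p, φ, hφ, hconv⟩ := SeqCompactSpace.tendsto_subseq (x ∘ e)
  refine ⟨Set.range (e ∘ φ), ?_, ?_, p, ?_⟩
  · rw [← hrange]; exact Set.range_comp_subset_range φ e
  · exact Set.infinite_range_of_injective (he.injective.comp hφ.injective)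
  · exact tendsto_along_range x (he.comp hφ) hconv

/-- From tendsto along an infinite set, extract a genuine sequence. -/
lemma exists_seq_of_tendsto_along {X : Type*} [TopologicalSpace X] {x : ℕ → X} {H : Set ℕ}
    (hH : H.Infinite) {p : X} (h : Tendsto x (atTop ⊓ 𝓟 H) (nhds p)) :
    ∃ e : ℕ → ℕ, (∀ n, e n ∈ H) ∧ Tendsto (x ∘ e) atTop (nhds p) := by
  obtain ⟨e, he, hrange⟩ := exists_enum hH
  have hmem : ∀ n, e n ∈ H := fun n => hrange ▸ Set.mem_range_self n
  have h1 : Tendsto e atTop (atTop ⊓ 𝓟 H) :=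
    tendsto_inf.mpr ⟨he.tendsto_atTop, tendsto_principal.mpr (Eventually.of_forall hmem)⟩
  exact ⟨e, hmem, h.comp h1⟩

lemma mem_seqCl_of_seq {X : Type*} [TopologicalSpace X] {U : Set X} {u : ℕ → X} {q : X}
    (hu : ∀ n, u n ∈ U) (hq : Tendsto u atTop (nhds q)) : q ∈ seqCl U := by
  rw [seqCl, Set.mem_sInter]
  rintro C ⟨hUC, hC⟩
  exact hC (fun n => hUC (hu n)) hq

lemma self_subset_seqLimitPoints {X : Type*} [TopologicalSpace X] (Y : Set X) :
    Y ⊆ seqLimitPoints Y := fun y hy => ⟨fun _ => y, fun _ => hy, tendsto_const_nhds⟩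

lemma infinite_bad_of_not_tendsto {X : Type*} [TopologicalSpace X] {x : ℕ → X} {H : Set ℕ}
    {p : X} (h : ¬ Tendsto x (atTop ⊓ 𝓟 H) (nhds p)) :
    ∃ W : Set X, IsOpen W ∧ p ∈ W ∧ {n | n ∈ H ∧ x n ∉ W}.Infinite := by
  by_contra hc
  push_neg at hc
  apply h
  rw [tendsto_nhds]
  intro W hW hpW
  have hfin : {n | n ∈ H ∧ x n ∉ W}.Finite := by
    by_contra hinf
    exact hinf (hc W hW hpW)
  obtain ⟨N, hN⟩ := hfin.bddAbove
  rw [Filter.mem_inf_principal]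
  filter_upwards [eventually_ge_atTop (N + 1)] with n hn hnH
  by_contra hxn
  exact absurd (hN ⟨hnH, hxn⟩) (by omega)

lemma infinite_inter_of_tendsto {X : Type*} [TopologicalSpace X] {x : ℕ → X} {H : Set ℕ}
    (hH : H.Infinite) {p : X} {V : Set X} (hV : V ∈ nhds p)
    (h : Tendsto x (atTop ⊓ 𝓟 H) (nhds p)) : {n | n ∈ H ∧ x n ∈ V}.Infinite := by
  have hmem := h hV
  rw [Filter.mem_map, Filter.mem_inf_principal, mem_atTop_sets] at hmem
  obtain ⟨N, hN⟩ := hmem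
  refine ((hH.diff (Set.finite_Iio N)).mono ?_)
  rintro n ⟨hnH, hn⟩
  exact ⟨hnH, hN n (not_lt.mp hn) hnH⟩

lemma exists_unsplit_of_finite {𝒮 : Set (Set ℕ)} (h : 𝒮.Finite) :
    ∃ A : Set ℕ, A.Infinite ∧ ∀ S ∈ 𝒮, A ⊆ S ∨ A ∩ S = ∅ := by
  refine Set.Finite.induction_on _ h ⟨Set.univ, Set.infinite_univ, by simp⟩ ?_
  intro S 𝒮 _ _ ih
  · obtain ⟨A, hAinf, hA⟩ := ih
    by_cases hcase : (A ∩ S).Infinite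
    · refine ⟨A ∩ S, hcase, ?_⟩
      rintro T (rfl | hT)
      · exact Or.inl Set.inter_subset_right
      · rcases hA T hT with h1 | h1
        · exact Or.inl (Set.inter_subset_left.trans h1)
        · exact Or.inr (Set.subset_empty_iff.mp
            ((Set.inter_subset_inter_left T Set.inter_subset_left).trans h1.subset))
    · have hfin : (A ∩ S).Finite := Set.not_infinite.mp hcase
      have hdiff : (A \ S).Infinite := by
        have := hAinf.diff hfin
        refine this.mono ?_
        rintro n ⟨hnA, hn⟩
        exact ⟨hnA, fun hnS => hn ⟨hnA, hnS⟩⟩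
      refine ⟨A \ S, hdiff, ?_⟩
      rintro T (rfl | hT)
      · exact Or.inr (Set.diff_inter_self)
      · rcases hA T hT with h1 | h1
        · exact Or.inl (Set.diff_subset.trans h1)
        · exact Or.inr (Set.subset_empty_iff.mp
            ((Set.inter_subset_inter_left T Set.diff_subset).trans h1.subset))

lemma aleph0_le_splittingNumber_s9 (h : splittingNumber ≠ 0) : ℵ₀ ≤ splittingNumber := by
  have hne : { c | ∃ 𝒮 : Set (Set ℕ), IsSplittingFamily 𝒮 ∧ #𝒮 = c }.Nonempty := by
    by_contra hc
    rw [Set.not_nonempty_iff_eq_empty] at hc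
    rw [splittingNumber, hc] at h
    simp at h
  have hmem : splittingNumber ∈ { c | ∃ 𝒮 : Set (Set ℕ), IsSplittingFamily 𝒮 ∧ #𝒮 = c } :=
    csInf_mem hne
  obtain ⟨𝒮₀, hsp, hcard⟩ := hmem
  have hinf : 𝒮₀.Infinite := by
    by_contra hfin
    exact not_splitting_of_finite (Set.not_infinite.mp hfin) hsp
  rw [← hcard]
  haveI := hinf.to_subtype
  exact Cardinal.infinite_iff.mp ‹Infinite ↥𝒮₀›

theorem simultaneous_of_seqCompact_hausdorff_cHw_lt (X : Type) [TopologicalSpace X]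
    [T2Space X] [SeqCompactSpace X]
    (hcHw : ∃ κ : Cardinal, κ < splittingNumber ∧
      ∀ Y : Set X, Y.Countable → ∃ 𝒞 : Set (Set X), IsSepLimitCover Y 𝒞 ∧ #𝒞 ≤ κ)
    (I : Type) (hI : #I < splittingNumber) (x : I → ℕ → X) :
    ∃ H : Set ℕ, H.Infinite ∧ ∀ i : I, ConvergesAlong (x i) H := by
  classical
  obtain ⟨κ, hκs, hcov⟩ := hcHw
  choose 𝒞 h𝒞 h𝒞κ using fun i => hcov (Set.range (x i)) (Set.countable_range _)
  set 𝒮 : Set (Set ℕ) := ⋃ i, (fun U => {n | x i n ∈ U}) '' 𝒞 i with h𝒮def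
  have hs0 : splittingNumber ≠ 0 := fun h => absurd (h ▸ hκs) (LE.le.not_gt (Cardinal.zero_le κ))
  have hs_aleph : ℵ₀ ≤ splittingNumber := aleph0_le_splittingNumber_s9 hs0
  have hcard𝒮 : #𝒮 < splittingNumber := by
    calc #𝒮 ≤ #I * ⨆ i, #((fun U => {n | x i n ∈ U}) '' 𝒞 i) := Cardinal.mk_iUnion_le _
      _ ≤ #I * κ := mul_le_mul_right
          (ciSup_le' fun i => (Cardinal.mk_image_le).trans (h𝒞κ i)) _
      _ < splittingNumber := Cardinal.mul_lt_of_lt hs_aleph hI hκs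
  have hnotsplit : ¬ IsSplittingFamily 𝒮 := by
    intro hsp
    have hle : splittingNumber ≤ #𝒮 := by
      rw [splittingNumber]; exact csInf_le' ⟨𝒮, hsp, rfl⟩
    exact absurd hle (not_le.mpr hcard𝒮)
  rw [IsSplittingFamily] at hnotsplit
  push_neg at hnotsplit
  obtain ⟨H, hHinf, hH⟩ := hnotsplit
  refine ⟨H, hHinf, fun i => ?_⟩
  -- get a candidate limit point
  obtain ⟨H', hH'sub, hH'inf, p, hp⟩ := exists_subconverge (x i) hHinf
  have hpY : p ∈ seqLimitPoints (Set.range (x i)) := by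
    obtain ⟨e, hemem, hconv⟩ := exists_seq_of_tendsto_along hH'inf hp
    exact ⟨x i ∘ e, fun n => Set.mem_range_self _, hconv⟩
  refine ⟨p, ?_⟩
  by_contra hnot
  obtain ⟨W, hWopen, hpW, hbad⟩ := infinite_bad_of_not_tendsto hnot
  obtain ⟨H₃, hH₃sub, hH₃inf, q, hq⟩ := exists_subconverge (x i) hbad
  -- q is outside W, so q ≠ p
  have hqW : q ∈ Wᶜ := by
    obtain ⟨e, hemem, hconv⟩ := exists_seq_of_tendsto_along hH₃inf hq
    have hprop : ∀ n ∈ H₃, n ∈ H ∧ x i n ∉ W := fun n hn => hH₃sub hn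
    exact hWopen.isClosed_compl.mem_of_tendsto hconv
      (Eventually.of_forall fun n => (hprop _ (hemem n)).2)
  have hqp : q ≠ p := fun h => hqW (h ▸ hpW)
  obtain ⟨U, hU𝒞, hpU, hqU⟩ := (h𝒞 i).2 p hpY q hqp
  obtain ⟨hUsub, V, hVopen, hUeq⟩ := (h𝒞 i).1 U hU𝒞
  set S : Set ℕ := {n | x i n ∈ U} with hSdef
  have hS𝒮 : S ∈ 𝒮 := Set.mem_iUnion.mpr ⟨i, Set.mem_image_of_mem _ hU𝒞⟩
  -- H ∩ S is infinite
  have hpV : p ∈ V := by rw [hUeq] at hpU; exact hpU.1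
  have hHS : (H ∩ S).Infinite := by
    have hinf := infinite_inter_of_tendsto hH'inf (hVopen.mem_nhds hpV) hp
    refine hinf.mono ?_
    rintro n ⟨hnH', hnV⟩
    refine ⟨hH'sub hnH', ?_⟩
    rw [hSdef, Set.mem_setOf_eq, hUeq]
    exact ⟨hnV, self_subset_seqLimitPoints _ (Set.mem_range_self n)⟩
  -- hence H \ S is finite
  have hHdS : (H \ S).Finite := by
    by_contra hc
    exact hc (hH S hS𝒮 hHS)
  -- so H₃ ∩ S is infinite, giving q ∈ seqCl U
  have hH₃S : (H₃ ∩ S).Infinite := by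
    refine (hH₃inf.diff hHdS).mono ?_
    rintro n ⟨hn3, hn⟩
    have hprop : ∀ m ∈ H₃, m ∈ H ∧ x i m ∉ W := fun m hm => hH₃sub hm
    refine ⟨hn3, ?_⟩
    by_contra hnS
    exact hn ⟨(hprop n hn3).1, hnS⟩
  have hq4 : Tendsto (x i) (atTop ⊓ 𝓟 (H₃ ∩ S)) (nhds q) :=
    tendsto_mono_subset Set.inter_subset_left hq
  obtain ⟨e, hemem, hconv⟩ := exists_seq_of_tendsto_along hH₃S hq4
  exact hqU (mem_seqCl_of_seq (fun n => (hemem n).2) hconv)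
end

section
/- Let ι be an infinite type and let Y : ι → Type be a family of topological spaces, each sequentially compact. Then the one-point (Aleksandroff) compactification OnePoint (Σ i, Y i) of the disjoint union of the spaces Y i is sequentially compact. -/
open Filter Topology Cardinal

theorem onePoint_sigma_seqCompact (ι : Type) [Infinite ι] (Y : ι → Type)
    [∀ i, TopologicalSpace (Y i)] [∀ i, SeqCompactSpace (Y i)] :
    SeqCompactSpace (OnePoint (Σ i, Y i)) := by
  constructor
  intro x _
  by_cases hfib : ∃ i, ∃ᶠ n in atTop, ∃ y : Y i, x n = ((⟨i, y⟩ : Σ i, Y i) : OnePoint (Σ i, Y i))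
  · obtain ⟨i, hi⟩ := hfib
    obtain ⟨φ, hφ, hφ'⟩ := extraction_of_frequently_atTop hi
    choose y hy using hφ'
    obtain ⟨p, _, ψ, hψ, hp⟩ := SeqCompactSpace.isSeqCompact_univ (x := y) (fun n => Set.mem_univ _)
    refine ⟨((⟨i, p⟩ : Σ i, Y i) : OnePoint (Σ i, Y i)), Set.mem_univ _, φ ∘ ψ, hφ.comp hψ, ?_⟩
    have hcont : Continuous (fun q : Y i => ((⟨i, q⟩ : Σ i, Y i) : OnePoint (Σ i, Y i))) :=
      OnePoint.continuous_coe.comp continuous_sigmaMk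
    have := (hcont.tendsto p).comp hp
    convert this using 1
    funext n
    simp only [Function.comp_apply]
    exact hy (ψ n)
  · push_neg at hfib
    refine ⟨OnePoint.infty, Set.mem_univ _, id, strictMono_id, ?_⟩
    rw [OnePoint.hasBasis_nhds_infty.tendsto_right_iff]
    rintro s ⟨hscl, hsc⟩
    obtain ⟨t, ht⟩ := hsc.elim_finite_subcover (fun i => Set.range (Sigma.mk i))
      (fun i => isOpen_range_sigmaMk) (fun z _ => Set.mem_iUnion.2 ⟨z.1, z.2, rfl⟩)
    have hev : ∀ᶠ n in atTop, ∀ i ∈ t, ¬ ∃ y : Y i, x n = ((⟨i, y⟩ : Σ i, Y i) : OnePoint (Σ i, Y i)) := by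
      rw [Filter.eventually_all_finset]
      exact fun i _ => (hfib i).mono (fun n hn ⟨y, hy⟩ => hn y hy)
    filter_upwards [hev] with n hn
    simp only [Function.comp_apply, id_eq]
    match hxz : x n with
    | OnePoint.infty => exact Or.inr rfl
    | OnePoint.some z =>
      refine Or.inl ⟨z, fun hz => ?_, ?_⟩
      · obtain ⟨i, hit, yz, hyz⟩ := Set.mem_iUnion₂.mp (ht hz)
        exact hn i hit ⟨yz, by rw [hxz, hyz]; rfl⟩
      · rfl
end

section
/- Let κ be an infinite cardinal with κ < 𝔰, let I be a type with #I < 𝔰, let Y : I → Type be a family of sequentially compact topological spaces with weight(Y i) ≤ κ for every i, and let x : (i : I) → ℕ → Y i assign to each i a sequence with values in Y i. Then there exists an infinite set H ⊆ ℕ such that for every i the sequence x i converges along H in Y i. -/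
open Filter Topology Cardinal

theorem family_simultaneous_of_weight_le_kappa (κ : Cardinal) (hκ : ℵ₀ ≤ κ)
    (hκs : κ < splittingNumber)
    (I : Type) (hI : #I < splittingNumber) (Y : I → Type)
    [∀ i, TopologicalSpace (Y i)] [∀ i, SeqCompactSpace (Y i)]
    (hw : ∀ i : I, TopologicalSpace.weight (Y i) ≤ κ)
    (x : (i : I) → ℕ → Y i) :
    ∃ H : Set ℕ, H.Infinite ∧ ∀ i : I, ConvergesAlong (x i) H := by
  -- choose a basis of size ≤ κ for each space
  have hbasis : ∀ i, ∃ B : Set (Set (Y i)),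
      TopologicalSpace.IsTopologicalBasis B ∧ #B ≤ κ := by
    intro i
    have hne : {c | ∃ B : Set (Set (Y i)),
        TopologicalSpace.IsTopologicalBasis B ∧ #B = c}.Nonempty :=
      ⟨#{s : Set (Y i) | IsOpen s}, {s | IsOpen s},
        TopologicalSpace.isTopologicalBasis_opens, rfl⟩
    obtain ⟨B, hB, hBc⟩ := csInf_mem hne
    exact ⟨B, hB, hBc.le.trans (hw i)⟩
  choose Bas hBas hBcard using hbasis
  set 𝒮 : Set (Set ℕ) := ⋃ i, (fun B => x i ⁻¹' B) '' Bas i with h𝒮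
  have hcard : #𝒮 < splittingNumber := by
    have h1 : #𝒮 ≤ #I * ⨆ i, #((fun B => x i ⁻¹' B) '' Bas i) :=
      Cardinal.mk_iUnion_le _
    have h2 : (⨆ i, #((fun B => x i ⁻¹' B) '' Bas i)) ≤ κ :=
      ciSup_le' fun i => (Cardinal.mk_image_le).trans (hBcard i)
    have h3 : #𝒮 ≤ #I * κ := h1.trans (mul_le_mul_right h2 _)
    have h4 : #I * κ ≤ max (max #I κ) ℵ₀ := Cardinal.mul_le_max _ _
    have h5 : max (max #I κ) ℵ₀ = max #I κ :=
      max_eq_left (hκ.trans (le_max_right _ _))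
    exact lt_of_le_of_lt (h3.trans (h4.trans_eq h5)) (max_lt hI hκs)
  -- 𝒮 is not a splitting family
  have hns : ¬ IsSplittingFamily 𝒮 := by
    intro h
    have hmem : #↑𝒮 ∈ {c | ∃ T : Set (Set ℕ), IsSplittingFamily T ∧ #T = c} :=
      ⟨𝒮, h, rfl⟩
    exact absurd (csInf_le' hmem) (not_le.2 hcard)
  rw [IsSplittingFamily] at hns
  push_neg at hns
  obtain ⟨A, hA, hAs⟩ := hns
  refine ⟨A, hA, fun i => ?_⟩
  -- enumerate A and extract a convergent subsequence
  set e : ℕ ↪ A := hA.natEmbedding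
  obtain ⟨p, φ, hφ, hlim⟩ := SeqCompactSpace.tendsto_subseq (fun k => x i ((e k : ℕ)))
  unfold ConvergesAlong
  refine ⟨p, ?_⟩
  rw [(hBas i).nhds_hasBasis.tendsto_right_iff]
  rintro B ⟨hBmem, hpB⟩
  set S : Set ℕ := x i ⁻¹' B with hS
  have hSmem : S ∈ 𝒮 := Set.mem_iUnion.2 ⟨i, ⟨B, hBmem, rfl⟩⟩
  -- A ∩ S is infinite
  have hASinf : (A ∩ S).Infinite := by
    have hev : ∀ᶠ k in atTop, x i ((e (φ k) : ℕ)) ∈ B :=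
      hlim (IsOpen.mem_nhds ((hBas i).isOpen hBmem) hpB)
    obtain ⟨N, hN⟩ := eventually_atTop.1 hev
    have hinj : Function.Injective (fun k : ℕ => (e (φ (k + N)) : ℕ)) := by
      intro a b hab
      have := e.injective (Subtype.ext hab)
      exact Nat.add_right_cancel (hφ.injective this)
    apply Set.infinite_of_injective_forall_mem hinj
    intro k
    exact ⟨(e (φ (k + N))).2, hN _ (Nat.le_add_left N k)⟩
  have hADfin : (A \ S).Finite :=
    hAs S hSmem hASinf
  -- conclude convergence along A
  rw [Filter.eventually_inf_principal]
  obtain ⟨N, hN⟩ := hADfin.bddAbove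
  filter_upwards [Filter.eventually_gt_atTop N] with n hn hnA
  by_contra hnS
  exact absurd (hN ⟨hnA, hnS⟩) (not_le.2 hn)
end

section
/- Assume the splitting number 𝔰 is a regular cardinal. Let I be a type with #I < 𝔰, let Y : I → Type be a family of sequentially compact topological spaces with weight(Y i) < 𝔰 for every i, and let x : (i : I) → ℕ → Y i assign to each i a sequence with values in Y i. Then there exists an infinite set H ⊆ ℕ such that for every i the sequence x i converges along H in Y i. -/
open Filter Topology Cardinal

theorem family_simultaneous_of_weight_lt_splitting_regular
    (hreg : Cardinal.IsRegular splittingNumber)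
    (I : Type) (hI : #I < splittingNumber) (Y : I → Type)
    [∀ i, TopologicalSpace (Y i)] [∀ i, SeqCompactSpace (Y i)]
    (hw : ∀ i : I, TopologicalSpace.weight (Y i) < splittingNumber)
    (x : (i : I) → ℕ → Y i) :
    ∃ H : Set ℕ, H.Infinite ∧ ∀ i : I, ConvergesAlong (x i) H := by
  -- choose a basis of minimal cardinality for each `Y i`
  have hbas : ∀ i : I, ∃ B : Set (Set (Y i)),
      TopologicalSpace.IsTopologicalBasis B ∧ #B = TopologicalSpace.weight (Y i) := by
    intro i
    have hne : { c | ∃ B : Set (Set (Y i)), TopologicalSpace.IsTopologicalBasis B ∧ #B = c }.Nonempty :=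
      ⟨_, {U | IsOpen U}, TopologicalSpace.isTopologicalBasis_opens, rfl⟩
    exact csInf_mem hne
  choose 𝔅 h𝔅 hcard using hbas
  -- the family of trace sets
  set 𝒮 : Set (Set ℕ) := ⋃ i, (fun B => {n | x i n ∈ B}) '' 𝔅 i with h𝒮
  have h𝒮lt : #𝒮 < splittingNumber := by
    refine lt_of_le_of_lt Cardinal.mk_iUnion_le_sum_mk ?_
    refine Cardinal.sum_lt_of_isRegular hreg hI fun i => ?_
    calc #((fun B => {n | x i n ∈ B}) '' 𝔅 i) ≤ #(𝔅 i) := Cardinal.mk_image_le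
      _ < splittingNumber := by rw [hcard i]; exact hw i
  -- 𝒮 is not splitting
  have hnot : ¬ IsSplittingFamily 𝒮 := by
    intro h
    have hmem : #𝒮 ∈ { c | ∃ 𝒯 : Set (Set ℕ), IsSplittingFamily 𝒯 ∧ #𝒯 = c } := ⟨𝒮, h, rfl⟩
    have : splittingNumber ≤ #𝒮 := csInf_le' hmem
    exact absurd this (not_le.2 h𝒮lt)
  -- get an unsplit infinite set A
  rw [IsSplittingFamily] at hnot
  push_neg at hnot
  obtain ⟨A, hA, hAns⟩ := hnot
  refine ⟨A, hA, fun i => ?_⟩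
  -- embed ℕ into A and use sequential compactness
  set u : ℕ → ℕ := fun n => ((hA.natEmbedding A) n : ℕ) with hu
  have hu_inj : Function.Injective u := fun a b h =>
    (hA.natEmbedding A).injective (Subtype.val_injective h)
  have hu_mem : ∀ n, u n ∈ A := fun n => ((hA.natEmbedding A) n).2
  obtain ⟨p, φ, hφ, hlim⟩ := SeqCompactSpace.tendsto_subseq (fun n => x i (u n))
  -- key: every open set around p meets x i infinitely often within A
  have key : ∀ B : Set (Y i), IsOpen B → p ∈ B → (A ∩ {n | x i n ∈ B}).Infinite := by
    intro B hB hpB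
    have hev : ∀ᶠ k in atTop, x i (u (φ k)) ∈ B := hlim (hB.mem_nhds hpB)
    obtain ⟨N, hN⟩ := eventually_atTop.1 hev
    have hinf : ({k | N ≤ k} : Set ℕ).Infinite := Set.Ici_infinite N
    have : ((fun k => u (φ k)) '' {k | N ≤ k}).Infinite :=
      hinf.image (Set.injOn_of_injective (hu_inj.comp hφ.injective))
    refine this.mono ?_
    rintro _ ⟨k, hk, rfl⟩
    exact ⟨hu_mem _, hN k hk⟩
  refine ⟨p, ?_⟩
  rw [((h𝔅 i).nhds_hasBasis).tendsto_right_iff]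
  rintro B ⟨hB𝔅, hpB⟩
  have hBopen : IsOpen B := (h𝔅 i).isOpen hB𝔅
  set S : Set ℕ := {n | x i n ∈ B} with hS
  have hSmem : S ∈ 𝒮 := Set.mem_iUnion.2 ⟨i, Set.mem_image_of_mem _ hB𝔅⟩
  have hAS : (A ∩ S).Infinite := key B hBopen hpB
  have hfin : (A \ S).Finite := hAns S hSmem hAS
  rw [eventually_inf_principal]
  obtain ⟨N, hN⟩ := hfin.bddAbove
  filter_upwards [eventually_gt_atTop N] with n hn hnA
  by_contra hns
  exact absurd (hN ⟨hnA, hns⟩) (not_le.2 hn)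
end

section
/- Let κ be an infinite cardinal with κ < 𝔰, let I be a type with #I < 𝔰, let Y : I → Type be a family of sequentially compact Hausdorff topological spaces such that for every i every countable subset of Y i admits a sequentially separating limit cover of cardinality at most κ, and let x : (i : I) → ℕ → Y i assign to each i a sequence with values in Y i. Then there exists an infinite set H ⊆ ℕ such that for every i the sequence x i converges along H in Y i. -/
open Filter Topology Cardinal

lemma subset_seqCl {X : Type*} [TopologicalSpace X] (U : Set X) : U ⊆ seqCl U :=
  fun x hx => Set.mem_sInter.mpr fun _C hC => hC.1 hx

lemma isSeqClosed_seqCl {X : Type*} [TopologicalSpace X] (U : Set X) :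
    IsSeqClosed (seqCl U) := fun u p hu hup =>
  Set.mem_sInter.mpr fun C hC => hC.2 (fun n => Set.mem_sInter.mp (hu n) C hC) hup

lemma exists_subseq_tendsto_along {X : Type*} [TopologicalSpace X] [SeqCompactSpace X]
    (x : ℕ → X) {A : Set ℕ} (hA : A.Infinite) :
    ∃ p, ∃ ψ : ℕ → ℕ, StrictMono ψ ∧ (∀ n, ψ n ∈ A) ∧
      Filter.Tendsto (x ∘ ψ) Filter.atTop (nhds p) := by
  obtain ⟨p, φ, hφ, hconv⟩ := SeqCompactSpace.tendsto_subseq (fun n => x (Nat.nth (· ∈ A) n))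
  exact ⟨p, Nat.nth (· ∈ A) ∘ φ, (Nat.nth_strictMono hA).comp hφ,
    fun n => Nat.nth_mem_of_infinite hA _, hconv⟩

theorem family_simultaneous_of_cHw_le_kappa (κ : Cardinal) (hκ : ℵ₀ ≤ κ)
    (hκs : κ < splittingNumber)
    (I : Type) (hI : #I < splittingNumber) (Y : I → Type)
    [∀ i, TopologicalSpace (Y i)] [∀ i, T2Space (Y i)] [∀ i, SeqCompactSpace (Y i)]
    (hcHw : ∀ i : I, ∀ Z : Set (Y i), Z.Countable →
      ∃ 𝒞 : Set (Set (Y i)), IsSepLimitCover Z 𝒞 ∧ #𝒞 ≤ κ)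
    (x : (i : I) → ℕ → Y i) :
    ∃ H : Set ℕ, H.Infinite ∧ ∀ i : I, ConvergesAlong (x i) H := by
  
  classical
  have hs0 : ℵ₀ ≤ splittingNumber := hκ.trans hκs.le
  choose 𝒞 h𝒞 h𝒞κ using fun i => hcHw i (Set.range (x i)) (Set.countable_range _)
  set F : Set (Set ℕ) := ⋃ i, (fun U => {n | x i n ∈ seqCl U}) '' 𝒞 i with hF
  have hFκ : #F < splittingNumber := by
    calc #F ≤ #I * ⨆ i, #((fun U => {n | x i n ∈ seqCl U}) '' 𝒞 i) := Cardinal.mk_iUnion_le _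
    _ ≤ #I * κ := by
        apply mul_le_mul_right
        exact ciSup_le' fun i => (Cardinal.mk_image_le).trans (h𝒞κ i)
    _ < splittingNumber := Cardinal.mul_lt_of_lt hs0 hI hκs
  have hns : ¬ IsSplittingFamily F := fun h =>
    absurd (csInf_le' (show #F ∈ {c | ∃ 𝒮 : Set (Set ℕ), IsSplittingFamily 𝒮 ∧ #𝒮 = c} from ⟨F, h, rfl⟩)) (not_le.mpr hFκ)
  rw [IsSplittingFamily] at hns
  push_neg at hns
  obtain ⟨A, hAinf, hA⟩ := hns
  refine ⟨A, hAinf, fun i => ?_⟩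
  have hZL : Set.range (x i) ⊆ seqLimitPoints (Set.range (x i)) := fun z hz =>
    ⟨fun _ => z, fun _ => hz, tendsto_const_nhds⟩
  obtain ⟨p, ψ, hψ, hψA, hconv⟩ := exists_subseq_tendsto_along (x i) hAinf
  have hpL : p ∈ seqLimitPoints (Set.range (x i)) := ⟨x i ∘ ψ, fun n => ⟨ψ n, rfl⟩, hconv⟩
  show ∃ p : Y i, Filter.Tendsto (x i) (Filter.atTop ⊓ Filter.principal A) (nhds p)
  refine ⟨p, ?_⟩
  rw [tendsto_nhds]
  intro W hW hpW
  by_contra hcon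
  have hB : {n | n ∈ A ∧ x i n ∉ W}.Infinite := by
    by_contra hfin
    rw [Set.not_infinite] at hfin
    apply hcon
    rw [Filter.mem_inf_principal]
    obtain ⟨N, hN⟩ := hfin.bddAbove
    filter_upwards [Filter.eventually_gt_atTop N] with n hn hnA
    by_contra hxnW
    exact absurd (hN ⟨hnA, hxnW⟩) (not_le.mpr hn)
  obtain ⟨q, χ, hχ, hχB, hqconv⟩ := exists_subseq_tendsto_along (x i) hB
  have hqW : q ∉ W :=
    hW.isClosed_compl.mem_of_tendsto hqconv (Filter.Eventually.of_forall fun n => (hχB n).2)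
  have hqp : q ≠ p := fun h => hqW (h ▸ hpW)
  obtain ⟨U, hU𝒞, hpU, hqU⟩ := (h𝒞 i).2 p hpL q hqp
  obtain ⟨hUL, V, hV, hUV⟩ := (h𝒞 i).1 U hU𝒞
  set S : Set ℕ := {n | x i n ∈ seqCl U} with hS
  have hAS : (A ∩ S).Infinite := by
    have hpV : p ∈ V := (hUV ▸ hpU).1
    have hev : ∀ᶠ n in Filter.atTop, (x i ∘ ψ) n ∈ V := hconv (hV.mem_nhds hpV)
    obtain ⟨N, hN⟩ := Filter.eventually_atTop.mp hev
    apply Set.infinite_of_injective_forall_mem (f := fun n : ℕ => ψ (n + N))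
    · intro a b hab
      exact Nat.add_right_cancel (hψ.injective hab)
    · intro n
      refine ⟨hψA _, subset_seqCl U ?_⟩
      rw [hUV]
      exact ⟨hN _ (Nat.le_add_left N n), hZL ⟨ψ (n + N), rfl⟩⟩
  have hdiff : (A \ S).Finite := by
    have hmem : S ∈ F := Set.mem_iUnion.mpr ⟨i, ⟨U, hU𝒞, rfl⟩⟩
    have := hA S hmem
    by_contra hinf
    exact hinf (this hAS)
  apply hqU
  obtain ⟨N, hN⟩ := hdiff.bddAbove
  have hmem : ∀ n, x i (χ (n + N + 1)) ∈ seqCl U := by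
    intro n
    have hge : N < χ (n + N + 1) := lt_of_lt_of_le (Nat.lt_succ_of_le (Nat.le_add_left N n))
      (hχ.le_apply)
    by_contra hx
    have : χ (n + N + 1) ∈ A \ S := ⟨(hχB _).1, hx⟩
    exact absurd (hN this) (not_le.mpr hge)
  have htend : Filter.Tendsto (fun n => x i (χ (n + N + 1))) Filter.atTop (nhds q) :=
    hqconv.comp (Filter.tendsto_add_atTop_nat (N + 1))
  exact isSeqClosed_seqCl U hmem htend
end

section
/- Let X be a sequentially compact topological space, let I be a type with #I < 𝔥, and let x : I → ℕ → X be a family of sequences. Then there exists an infinite set H ⊆ ℕ such that every sequence x i converges along H. -/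
open Filter Topology Cardinal

lemma tendsto_along_range_aux {X : Type*} [TopologicalSpace X] {x : ℕ → X} {ψ : ℕ → ℕ}
    (hψ : StrictMono ψ) {p : X} (h : Tendsto (fun n => x (ψ n)) atTop (𝓝 p)) :
    Tendsto x (atTop ⊓ 𝓟 (Set.range ψ)) (𝓝 p) := by
  intro U hU
  rw [Filter.mem_map, Filter.mem_inf_principal]
  obtain ⟨N, hN⟩ := Filter.eventually_atTop.1 (h hU)
  filter_upwards [Filter.eventually_ge_atTop (ψ N)] with m hm hmr
  obtain ⟨n, rfl⟩ := hmr
  exact hN n (hψ.le_iff_le.1 hm)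

theorem simultaneous_of_lt_distributivityNumber (X : Type) [TopologicalSpace X]
    [SeqCompactSpace X] (I : Type) (hI : #I < distributivityNumber) (x : I → ℕ → X) :
    ∃ H : Set ℕ, H.Infinite ∧ ∀ i : I, ConvergesAlong (x i) H := by
  classical
  by_cases hne : Nonempty I
  · set D : I → Set (Set ℕ) := fun i => {H | H.Infinite ∧ ConvergesAlong (x i) H} with hDdef
    have hOD : ∀ i, IsOpenDense (D i) := by
      intro i
      refine ⟨fun H hH => hH.1, ?_, ?_⟩
      · rintro H ⟨hHinf, p, hp⟩ H' hsub hinf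
        exact ⟨hinf, p, hp.mono_left (inf_le_inf_left _ (Filter.principal_mono.2 hsub))⟩
      · intro A hA
        set e : ℕ → ℕ := Nat.nth (· ∈ A) with he
        have hem : StrictMono e := Nat.nth_strictMono hA
        obtain ⟨p, φ, hφ, hconv⟩ := SeqCompactSpace.tendsto_subseq (fun n => x i (e n))
        refine ⟨Set.range (e ∘ φ), ⟨Set.infinite_range_of_injective (hem.comp hφ).injective,
          p, tendsto_along_range_aux (hem.comp hφ) hconv⟩, ?_⟩
        rintro _ ⟨n, rfl⟩
        exact Nat.nth_mem_of_infinite hA (φ n)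
    have hnonempty : (⋂ i, D i) ≠ ∅ := by
      intro hempty
      have hle : distributivityNumber ≤ #I := csInf_le' ⟨I, D, hOD, hempty, rfl⟩
      exact absurd hI (not_lt.2 hle)
    obtain ⟨H, hH⟩ := Set.nonempty_iff_ne_empty.2 hnonempty
    have hmem := Set.mem_iInter.1 hH
    exact ⟨H, (hmem (Classical.arbitrary I)).1, fun i => (hmem i).2⟩
  · exact ⟨Set.univ, Set.infinite_univ, fun i => absurd ⟨i⟩ hne⟩
end

section
/- The distributivity number 𝔥 is at most the cofinality of the splitting number 𝔰, i.e. 𝔥 ≤ (𝔰.ord).cof. -/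
open Filter Topology Cardinal

-- aux lemmas
lemma my_exists_split (A : Set ℕ) (hA : A.Infinite) :
    ∃ S : Set ℕ, (A ∩ S).Infinite ∧ (A \ S).Infinite := by
  have := hA.to_subtype
  obtain ⟨e⟩ : Nonempty (ℕ ≃ ↥A) := nonempty_equiv_of_countable
  have hr1 : (Set.range (fun n => (e (2*n) : ℕ))).Infinite := by
    apply Set.infinite_range_of_injective
    intro a b h
    simpa using e.injective (Subtype.ext h)
  have hr2 : (Set.range (fun n => (e (2*n+1) : ℕ))).Infinite := by
    apply Set.infinite_range_of_injective
    intro a b h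
    simpa using e.injective (Subtype.ext h)
  refine ⟨Set.range (fun n => (e (2*n) : ℕ)), ?_, ?_⟩
  · apply hr1.mono
    rintro x ⟨n, rfl⟩
    exact ⟨(e (2*n)).2, ⟨n, rfl⟩⟩
  · apply hr2.mono
    rintro x ⟨n, rfl⟩
    refine ⟨(e (2*n+1)).2, ?_⟩
    rintro ⟨m, hm⟩
    have := e.injective (Subtype.ext hm)
    omega

lemma my_unsplit_mono {B' B T : Set ℕ} (h : B' ⊆ B)
    (hB : ¬((B ∩ T).Infinite ∧ (B \ T).Infinite)) :
    ¬((B' ∩ T).Infinite ∧ (B' \ T).Infinite) := by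
  rw [not_and_or, Set.not_infinite, Set.not_infinite] at *
  rcases hB with hB | hB
  · exact Or.inl (hB.subset (Set.inter_subset_inter_left _ h))
  · exact Or.inr (hB.subset (Set.diff_subset_diff_left h))

lemma my_finite_not_split (𝒮 : Set (Set ℕ)) (h𝒮 : 𝒮.Finite) :
    ∀ A : Set ℕ, A.Infinite → ∃ B ⊆ A, B.Infinite ∧
      ∀ S ∈ 𝒮, ¬((B ∩ S).Infinite ∧ (B \ S).Infinite) := by
  refine Set.Finite.induction_on (motive := fun 𝒮 _ => ∀ A : Set ℕ, A.Infinite → ∃ B ⊆ A, B.Infinite ∧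
      ∀ S ∈ 𝒮, ¬((B ∩ S).Infinite ∧ (B \ S).Infinite)) 𝒮 h𝒮
      (fun A hA => ⟨A, subset_rfl, hA, by simp⟩) ?_
  rintro S 𝒮 - - ih A hA
  obtain ⟨B, hBA, hB, hBs⟩ := ih A hA
  by_cases h : (B ∩ S).Infinite
  · refine ⟨B ∩ S, (Set.inter_subset_left).trans hBA, h, ?_⟩
    intro T hT
    rcases Set.mem_insert_iff.1 hT with rfl | hT
    · rw [not_and_or, Set.not_infinite, Set.not_infinite]
      exact Or.inr ((Set.finite_empty).subset (by intro x hx; exact hx.2 hx.1.2))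
    · exact my_unsplit_mono Set.inter_subset_left (hBs T hT)
  · refine ⟨B, hBA, hB, ?_⟩
    intro T hT
    rcases Set.mem_insert_iff.1 hT with rfl | hT
    · exact fun hc => h hc.1
    · exact hBs T hT

lemma my_splitting_univ : IsSplittingFamily Set.univ := by
  intro A hA
  obtain ⟨S, h1, h2⟩ := my_exists_split A hA
  exact ⟨S, Set.mem_univ _, h1, h2⟩

lemma my_aleph0_le : ℵ₀ ≤ splittingNumber := by
  have hne : { c | ∃ 𝒮 : Set (Set ℕ), IsSplittingFamily 𝒮 ∧ #𝒮 = c }.Nonempty :=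
    ⟨#(Set.univ : Set (Set ℕ)), Set.univ, my_splitting_univ, rfl⟩
  apply le_csInf hne
  rintro c ⟨𝒮, h𝒮, rfl⟩
  by_contra h
  rw [not_le] at h
  have hfin : 𝒮.Finite := Cardinal.lt_aleph0_iff_set_finite.1 h
  obtain ⟨B, _, hB, hBs⟩ := my_finite_not_split 𝒮 hfin Set.univ Set.infinite_univ
  obtain ⟨T, hT, hsp⟩ := h𝒮 B hB
  exact hBs T hT hsp

lemma my_not_splitting {𝒯 : Set (Set ℕ)} (h : #𝒯 < splittingNumber) :
    ∃ A : Set ℕ, A.Infinite ∧ ∀ T ∈ 𝒯, ¬((A ∩ T).Infinite ∧ (A \ T).Infinite) := by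
  have hns : ¬ IsSplittingFamily 𝒯 := by
    intro hs
    have hmem : #𝒯 ∈ { c | ∃ 𝒮 : Set (Set ℕ), IsSplittingFamily 𝒮 ∧ #𝒮 = c } := ⟨𝒯, hs, rfl⟩
    exact absurd (csInf_le' hmem) (not_le.2 h)
  simp only [IsSplittingFamily] at hns
  push_neg at hns
  obtain ⟨A, hA, h2⟩ := hns
  exact ⟨A, hA, fun T hT hc => hc.2 (h2 T hT hc.1)⟩

lemma my_dense_core {𝒯 : Set (Set ℕ)} (h : #𝒯 < splittingNumber)
    (H : Set ℕ) (hH : H.Infinite) :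
    ∃ H' ⊆ H, H'.Infinite ∧ ∀ T ∈ 𝒯, ¬((H' ∩ T).Infinite ∧ (H' \ T).Infinite) := by
  have := hH.to_subtype
  obtain ⟨e⟩ : Nonempty (ℕ ≃ ↥H) := nonempty_equiv_of_countable
  set f : ℕ → ℕ := fun n => (e n : ℕ) with hf
  have hfi : Function.Injective f := fun a b hab => e.injective (Subtype.ext hab)
  set 𝒯' : Set (Set ℕ) := (fun T => f ⁻¹' T) '' 𝒯 with h𝒯'
  have h𝒯'c : #𝒯' < splittingNumber := lt_of_le_of_lt Cardinal.mk_image_le h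
  obtain ⟨A, hA, hAs⟩ := my_not_splitting h𝒯'c
  refine ⟨f '' A, ?_, hA.image (hfi.injOn), ?_⟩
  · rintro x ⟨n, _, rfl⟩; exact (e n).2
  · intro T hT
    have h1 : f '' A ∩ T = f '' (A ∩ f ⁻¹' T) := (Set.image_inter_preimage f A T).symm
    have h2 : f '' A \ T = f '' (A \ f ⁻¹' T) := (Set.image_diff_preimage (f := f) (s := A) (t := T)).symm
    have := hAs (f ⁻¹' T) ⟨T, hT, rfl⟩
    rw [not_and_or, Set.not_infinite, Set.not_infinite] at this ⊢
    rw [h1, h2]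
    rcases this with h | h
    · exact Or.inl (h.image f)
    · exact Or.inr (h.image f)


theorem distributivityNumber_le_cof_splittingNumber :
    distributivityNumber ≤ (splittingNumber.ord).cof := by
  set s := splittingNumber with hsdef
  have hs0 : ℵ₀ ≤ s := my_aleph0_le
  have hne : { c | ∃ 𝒮 : Set (Set ℕ), IsSplittingFamily 𝒮 ∧ #𝒮 = c }.Nonempty :=
    ⟨#(Set.univ : Set (Set ℕ)), Set.univ, my_splitting_univ, rfl⟩
  obtain ⟨𝒮, h𝒮, h𝒮card⟩ := csInf_mem hne
  have hlim : Order.IsSuccLimit (s.ord) := Cardinal.isSuccLimit_ord hs0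
  have htype : @Ordinal.type s.ord.ToType (· < ·) isWellOrder_lt = s.ord :=
    Ordinal.type_toType _
  obtain ⟨C, hC, hCcard⟩ :=
    @Ordinal.cof_eq' s.ord.ToType (· < ·) isWellOrder_lt (by rw [htype]; exact hlim)
  have e : s.ord.ToType ≃ ↥𝒮 :=
    Classical.choice (Cardinal.eq.1 (by rw [Cardinal.mk_ord_toType, h𝒮card]; exact hsdef))
  set D : ↥C → Set (Set ℕ) := fun b =>
    {H | H.Infinite ∧ ∀ a : s.ord.ToType, a < b.1 →
      ¬((H ∩ ((e a : ↥𝒮) : Set ℕ)).Infinite ∧ (H \ ((e a : ↥𝒮) : Set ℕ)).Infinite)} with hD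
  have hOD : ∀ b, IsOpenDense (D b) := by
    intro b
    refine ⟨fun H hH => hH.1,
      fun H hH H' hsub hinf => ⟨hinf, fun a ha => my_unsplit_mono hsub (hH.2 a ha)⟩, ?_⟩
    intro H hH
    set 𝒯 : Set (Set ℕ) := (fun a => ((e a : ↥𝒮) : Set ℕ)) '' {a | a < b.1} with h𝒯
    have hIio : #{a : s.ord.ToType | a < b.1} < s := by
      have h1 := @Cardinal.card_typein_lt s.ord.ToType (· < ·) isWellOrder_lt b.1
        (by rw [Cardinal.mk_ord_toType]; exact htype.symm)
      rw [Cardinal.mk_ord_toType] at h1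
      exact h1
    have hcard : #𝒯 < s := lt_of_le_of_lt Cardinal.mk_image_le hIio
    obtain ⟨H', hsub, hinf, hface⟩ := my_dense_core hcard H hH
    exact ⟨H', ⟨hinf, fun a ha => hface _ ⟨a, ha, rfl⟩⟩, hsub⟩
  have hempty : (⋂ b, D b) = ∅ := by
    rw [Set.eq_empty_iff_forall_notMem]
    intro H hH
    rw [Set.mem_iInter] at hH
    have hTne : Nonempty s.ord.ToType :=
      Ordinal.nonempty_toType_iff.2 hlim.pos.ne'
    obtain ⟨a₀⟩ := hTne
    obtain ⟨b₀, hb₀, _⟩ := hC a₀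
    have hHinf : H.Infinite := (hH ⟨b₀, hb₀⟩).1
    obtain ⟨T, hT, hsplit⟩ := h𝒮 H hHinf
    obtain ⟨b, hb, hab⟩ := hC (e.symm ⟨T, hT⟩)
    have := (hH ⟨b, hb⟩).2 (e.symm ⟨T, hT⟩) hab
    rw [e.apply_symm_apply] at this
    exact this hsplit
  have hle : distributivityNumber ≤ #↥C := by
    have hmem : #↥C ∈ { c | ∃ (ι : Type) (D : ι → Set (Set ℕ)),
        (∀ i, IsOpenDense (D i)) ∧ (⋂ i, D i) = ∅ ∧ #ι = c } :=
      ⟨↥C, D, hOD, hempty, rfl⟩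
    exact csInf_le' hmem
  rw [htype] at hCcard
  rwa [hCcard] at hle
end
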